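/- arXiv:0708.3664 — 2 statements merged into one kernel-verified Lean document; each statement's English description precedes it below -/
import Mathlib

section
/- Let f : X \to Y be \epsilon-equidistributed between finite nonempty sets. Then for every subset X_0 \subseteq X, |f(X_0)|/|Y| \ge |X_0|/|X| - 3\epsilon. -/
/-!
Write `p = |X|/|Y|` for the average fiber size. The fibers over `f(X₀)` cover `X₀`. Those over
points of the good set `Y'` have at most `(1 + ε) p` elements each, so they contribute at most
`|f(X₀)| (1 + ε) p`; the fibers over the bad set `Y \ Y'` hold together at most `2ε|X|` points,
because the good fibers alone already hold at least `(1 - ε)² |X|`. Dividing by `|X|` and using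
`|f(X₀)| ≤ |Y|` gives the bound.
-/

open Finset

section WeightedSums

variable {ι : Type*} [DecidableEq ι] {w : ι → ℝ}

lemma sum_le_card_mul_add_sum_compl [Fintype ι] (hw : ∀ i, 0 ≤ w i) {s t : Finset ι} {b : ℝ}
    (hb : 0 ≤ b) (hup : ∀ i ∈ s, w i ≤ b) :
    ∑ i ∈ t, w i ≤ #t * b + ∑ i ∈ sᶜ, w i := by
  rw [← sum_inter_add_sum_sdiff t s]
  refine add_le_add ?_ (sum_le_sum_of_subset_of_nonneg ?_ fun i _ _ => hw i)
  · calc ∑ i ∈ t ∩ s, w i ≤ #(t ∩ s) * b := by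
          simpa using sum_le_card_nsmul _ _ _ fun i hi => hup i (mem_inter.1 hi).2
      _ ≤ #t * b := by gcongr; exact inter_subset_left
  · exact fun i hi => mem_compl.2 (mem_sdiff.1 hi).2

lemma sum_compl_le_two_mul_sum [Fintype ι] [Nonempty ι] (hw : ∀ i, 0 ≤ w i) {s : Finset ι}
    {ε : ℝ} (hε : 0 ≤ ε) (hs : (1 - ε) * Fintype.card ι ≤ #s)
    (hlow : ∀ i ∈ s, (1 - ε) * ((∑ i, w i) / Fintype.card ι) ≤ w i) :
    ∑ i ∈ sᶜ, w i ≤ 2 * ε * ∑ i, w i := by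
  have hsplit := sum_add_sum_compl s w
  have hs_nonneg : 0 ≤ ∑ i ∈ s, w i := sum_nonneg fun i _ => hw i
  have htotal_nonneg : 0 ≤ ∑ i, w i := sum_nonneg fun i _ => hw i
  rcases le_or_gt ε 1 with hε1 | hε1
  · set p := (∑ i, w i) / Fintype.card ι
    have hMp : (Fintype.card ι : ℝ) * p = ∑ i, w i :=
      mul_div_cancel₀ _ (Nat.cast_ne_zero.2 Fintype.card_ne_zero)
    have hgood : (1 - ε) ^ 2 * ∑ i, w i ≤ ∑ i ∈ s, w i :=
      calc (1 - ε) ^ 2 * ∑ i, w i = (1 - ε) * Fintype.card ι * ((1 - ε) * p) := by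
            rw [← hMp]; ring
        _ ≤ #s * ((1 - ε) * p) := by gcongr
        _ ≤ ∑ i ∈ s, w i := by simpa using card_nsmul_le_sum _ _ _ hlow
    nlinarith [mul_nonneg (sq_nonneg ε) htotal_nonneg]
  · nlinarith

end WeightedSums

section Fibres

variable {X Y : Type*} [DecidableEq Y]

lemma sum_card_fiber [Fintype X] [Fintype Y] (f : X → Y) :
    ∑ y, #{x | f x = y} = Fintype.card X := by
  rw [← card_univ, card_eq_sum_card_fiberwise fun x _ => mem_univ (f x)]

lemma card_le_sum_card_fiber_image [Fintype X] (f : X → Y) (s : Finset X) :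
    #s ≤ ∑ y ∈ s.image f, #{x | f x = y} := by
  rw [card_eq_sum_card_image f s]
  exact sum_le_sum fun y _ => card_le_card (filter_subset_filter _ (subset_univ s))

end Fibres

theorem stmt_8 (X Y : Type*) [Fintype X] [Fintype Y] [Nonempty X] [Nonempty Y]
    [DecidableEq Y] (f : X → Y) (ε : ℝ) (hε : 0 < ε)
    (hequi : ∃ Y' : Finset Y, (1 - ε) * (Fintype.card Y : ℝ) ≤ Y'.card ∧
      ∀ y ∈ Y',
        (1 - ε) * ((Fintype.card X : ℝ) / (Fintype.card Y : ℝ)) ≤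
          ((Finset.univ.filter fun x => f x = y).card : ℝ) ∧
        ((Finset.univ.filter fun x => f x = y).card : ℝ) ≤
          (1 + ε) * ((Fintype.card X : ℝ) / (Fintype.card Y : ℝ)))
    (X₀ : Finset X) :
    ((X₀.image f).card : ℝ) / (Fintype.card Y : ℝ) ≥
      (X₀.card : ℝ) / (Fintype.card X : ℝ) - 3 * ε := by
  obtain ⟨Y', hY'card, hfiber⟩ := hequi
  have hX : (0 : ℝ) < Fintype.card X := Nat.cast_pos.2 Fintype.card_pos
  have hY : (0 : ℝ) < Fintype.card Y := Nat.cast_pos.2 Fintype.card_pos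
  have hsum : ∑ y, (#{x | f x = y} : ℝ) = Fintype.card X := mod_cast sum_card_fiber f
  have hbad : ∑ y ∈ Y'ᶜ, (#{x | f x = y} : ℝ) ≤ 2 * ε * Fintype.card X := by
    rw [← hsum]
    exact sum_compl_le_two_mul_sum (fun _ => by positivity) hε.le hY'card
      fun y hy => hsum ▸ (hfiber y hy).1
  have hcover : (#X₀ : ℝ) ≤
      #(X₀.image f) * ((1 + ε) * (Fintype.card X / Fintype.card Y)) + 2 * ε * Fintype.card X :=
    calc (#X₀ : ℝ) ≤ ∑ y ∈ X₀.image f, (#{x | f x = y} : ℝ) :=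
          mod_cast card_le_sum_card_fiber_image f X₀
      _ ≤ #(X₀.image f) * ((1 + ε) * (Fintype.card X / Fintype.card Y)) +
            ∑ y ∈ Y'ᶜ, (#{x | f x = y} : ℝ) :=
          sum_le_card_mul_add_sum_compl (fun _ => by positivity) (by positivity)
            fun y hy => (hfiber y hy).2
      _ ≤ _ := by gcongr
  have himage : (#(X₀.image f) : ℝ) / Fintype.card Y ≤ 1 :=
    (div_le_one hY).2 (mod_cast card_le_univ _)
  have hdiv : (#X₀ : ℝ) / Fintype.card X ≤ #(X₀.image f) / Fintype.card Y * (1 + ε) + 2 * ε := by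
    rw [div_le_iff₀ hX]
    exact hcover.trans_eq (by ring)
  nlinarith
end

section
/- Let n \ge 1 and f \ge 1. The probability that a uniformly random permutation g \in S_n has at least f fixed points is at most 2/f!. -/
/-! A permutation with at least `f` fixed points fixes pointwise some `f`-subset `S`, and exactly
`(n - f)!` permutations do so. A union bound over the `n.choose f` choices of `S` gives at most
`n.choose f * (n - f)! = n! / f!` such permutations, so the probability is even at most `1 / f!`. -/

open Finset
open scoped Nat

namespace Equiv.Perm

variable {α : Type*} [Fintype α] [DecidableEq α]

theorem card_filter_forall_mem_apply_eq_self (s : Finset α) :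
    #{g : Perm α | ∀ i ∈ s, g i = i} = (Fintype.card α - #s)! := by
  rw [← Fintype.card_subtype]
  have fixing_equiv_perm_compl :
      {g : Perm α // ∀ i ∈ s, g i = i} ≃ Perm {i // i ∉ s} :=
    (Equiv.subtypeEquivRight fun g => by simp).trans
      (Perm.subtypeEquivSubtypePerm fun i => i ∉ s).symm
  rw [Fintype.card_congr fixing_equiv_perm_compl, Fintype.card_perm,
    Fintype.card_subtype_compl, Fintype.card_coe]

theorem filter_le_card_fixed_subset_biUnion (f : ℕ) :
    ({g | f ≤ #{i | g i = i}} : Finset (Perm α)) ⊆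
      (univ.powersetCard f).biUnion fun s => {g | ∀ i ∈ s, g i = i} := by
  intro g hg
  obtain ⟨s, hs, hs_card⟩ := exists_subset_card_eq (mem_filter.mp hg).2
  simp only [mem_biUnion, mem_powersetCard, mem_filter, mem_univ, true_and]
  exact ⟨s, ⟨subset_univ s, hs_card⟩, fun i hi => (mem_filter.mp (hs hi)).2⟩

theorem card_filter_le_card_fixed_le_choose_mul_factorial (f : ℕ) :
    #{g : Perm α | f ≤ #{i | g i = i}} ≤ (Fintype.card α).choose f * (Fintype.card α - f)! :=
  calc #{g : Perm α | f ≤ #{i | g i = i}}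
      ≤ #((univ.powersetCard f).biUnion fun s => {g : Perm α | ∀ i ∈ s, g i = i}) :=
        card_le_card (filter_le_card_fixed_subset_biUnion f)
    _ ≤ ∑ s ∈ univ.powersetCard f, #{g : Perm α | ∀ i ∈ s, g i = i} := card_biUnion_le
    _ = ∑ _s ∈ univ.powersetCard f, (Fintype.card α - f)! :=
        sum_congr rfl fun s hs => by
          rw [card_filter_forall_mem_apply_eq_self, (mem_powersetCard.mp hs).2]
    _ = (Fintype.card α).choose f * (Fintype.card α - f)! := by
        rw [sum_const, card_powersetCard, card_univ, smul_eq_mul]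

theorem card_filter_le_card_fixed_mul_factorial_le_factorial (f : ℕ) :
    #{g : Perm α | f ≤ #{i | g i = i}} * f ! ≤ (Fintype.card α)! := by
  set n := Fintype.card α
  calc #{g : Perm α | f ≤ #{i | g i = i}} * f !
      ≤ n.choose f * (n - f)! * f ! :=
        Nat.mul_le_mul_right _ (card_filter_le_card_fixed_le_choose_mul_factorial f)
    _ ≤ n ! := by
        rcases le_or_gt f n with hfn | hnf
        · rw [mul_right_comm, Nat.choose_mul_factorial_mul_factorial hfn]
        · simp [Nat.choose_eq_zero_of_lt hnf]

end Equiv.Perm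

theorem stmt_19_general (n f : ℕ) :
    ((Finset.univ.filter
        (fun g : Equiv.Perm (Fin n) =>
          f ≤ (Finset.univ.filter fun i => g i = i).card)).card : ℝ) /
        (Nat.factorial n : ℝ) ≤ 2 / (Nat.factorial f : ℝ) := by
  have key : (#{g : Equiv.Perm (Fin n) | f ≤ #{i | g i = i}} * f ! : ℝ) ≤ n ! := by
    exact_mod_cast
      Fintype.card_fin n ▸ Equiv.Perm.card_filter_le_card_fixed_mul_factorial_le_factorial f
  have hn : (0 : ℝ) < n ! := by positivity
  rw [div_le_div_iff₀ hn (by positivity)]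
  linarith

theorem stmt_19 (n f : ℕ) (hn : 1 ≤ n) (hf : 1 ≤ f) :
    ((Finset.univ.filter
        (fun g : Equiv.Perm (Fin n) =>
          f ≤ (Finset.univ.filter fun i => g i = i).card)).card : ℝ) /
        (Nat.factorial n : ℝ) ≤ 2 / (Nat.factorial f : ℝ) :=
  stmt_19_general n f
end
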